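/- arXiv:2408.00003 — 3 statements merged into one kernel-verified Lean document; each statement's English description precedes it below -/
import Mathlib

section
/- Suppose premiums are adjusted according to the reported number of claims. Then for every i ∈ {1,…,l}, every integer z with 0 < z ≤ c_i and every n ≥ 1: ψ'_i(0;z,n+1) = Σ_{j=1}^l t_{ij}(0)·ψ_j(c_i−z, n)·f_{XY}(0,0) + Σ_{j=1}^l t_{ij}(1)·Σ_{x=1}^{c_i−z} ψ_j(c_i−z−x, n)·f_{XY}(x,0) + Σ_{j=1}^l t_{ij}(2)·[ Σ_{x=1}^{c_i−z−1} Σ_{y=1}^{c_i−z−x} ψ_j(c_i−z−x−y, n)·f_{XY}(x,y) + q·Σ_{y=1}^{c_j} ψ'_j(0;y,n)·ξ_y(c_i−z) + q·Σ_{y=c_j+1}^∞ ξ_y(c_i−z) ] + (1−q)·Σ_{y=1}^∞ ξ_y(c_i−z) + Σ_{x=c_i−z+1}^∞ f_X(x), and moreover ψ'_i(0;z,1) = (1−q)·Σ_{y=1}^∞ ξ_y(c_i−z) + Σ_{x=c_i−z+1}^∞ f_X(x). -/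
open scoped BigOperators

noncomputable section

namespace DelayedClaims

/-- Marginal pmf of the main claim: `f_X(x) = Σ_y f_{XY}(x,y)`. -/
def fX (f : ℕ → ℕ → ℝ) (x : ℕ) : ℝ := ∑' y : ℕ, f x y

/-- `ξ_y(m) = Σ_{x=1}^m f_{XY}(x, y + m - x)`. -/
def xi (f : ℕ → ℕ → ℝ) (y m : ℕ) : ℝ := ∑ x ∈ Finset.Icc 1 m, f x (y + m - x)

/-- Probability weight of a single period outcome `(x, y, d)`:
`d = true` means the settlement of the by-claim `y` is delayed (probability `q`). -/
def w (f : ℕ → ℕ → ℝ) (q : ℝ) (p : ℕ × ℕ × Bool) : ℝ :=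
  f p.1 p.2.1 * (if p.2.2 then q else 1 - q)

/-- Probability weight of an `n`-period path of i.i.d. period outcomes. -/
def pathWeight (f : ℕ → ℕ → ℝ) (q : ℝ) (n : ℕ) (ω : Fin n → ℕ × ℕ × Bool) : ℝ :=
  ∏ s : Fin n, w f q (ω s)

/-- Ruin indicator along a path.  Here `c` lists the premium levels,
`T i s` is the premium level following level `i` when the period adjustment
statistic equals `s`, `stat x y d carry` is the period adjustment statistic,
`i` is the current premium level, `u` the current surplus, and `carry` the amount
of the by-claim whose settlement was delayed from the previous period (`0` if none).
In each period the premium `c i` is received up front and the settled amount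
`x + (1-d)·y + carry` is paid at the end of the period; ruin occurs as soon as
the surplus becomes negative at the end of some period. -/
def ruined (l : ℕ) (c : Fin l → ℕ) (T : Fin l → ℕ → Fin l)
    (stat : ℕ → ℕ → Bool → ℕ → ℕ) :
    (n : ℕ) → (Fin n → ℕ × ℕ × Bool) → Fin l → ℤ → ℕ → Bool
  | 0, _, _, _, _ => false
  | n + 1, ω, i, u, carry =>
    let x : ℕ := (ω 0).1
    let y : ℕ := (ω 0).2.1
    let d : Bool := (ω 0).2.2
    let u' : ℤ := u + (c i : ℤ) - ((x : ℤ) + (if d then 0 else (y : ℤ)) + (carry : ℤ))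
    if u' < 0 then true
    else ruined l c T stat n (fun s => ω s.succ) (T i (stat x y d carry)) u'
      (if d then y else 0)

/-- `ψ'_i(u; z, n)`: the finite-time ruin probability over horizon `n` of the model with
an up-front delayed by-claim `z` settled at the end of period 1 (taking `z = 0` gives the
model without an up-front delayed by-claim), with initial premium level `i` and
initial surplus `u`.  By convention it equals `1` for `u < 0` and `0` for `n = 0`. -/
def psiAux (l : ℕ) (c : Fin l → ℕ) (T : Fin l → ℕ → Fin l)
    (stat : ℕ → ℕ → Bool → ℕ → ℕ) (f : ℕ → ℕ → ℝ) (q : ℝ)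
    (i : Fin l) (u : ℤ) (z : ℕ) (n : ℕ) : ℝ :=
  if u < 0 then 1
  else ∑' ω : Fin n → ℕ × ℕ × Bool,
    pathWeight f q n ω * (if ruined l c T stat n ω i u z then 1 else 0)

/-- `ψ_i(u, n)`: finite-time ruin probability without an up-front delayed by-claim. -/
def psi (l : ℕ) (c : Fin l → ℕ) (T : Fin l → ℕ → Fin l)
    (stat : ℕ → ℕ → Bool → ℕ → ℕ) (f : ℕ → ℕ → ℝ) (q : ℝ)
    (i : Fin l) (u : ℤ) (n : ℕ) : ℝ :=
  psiAux l c T stat f q i u 0 n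

/-- Adjustment statistic: aggregate reported claims `X + Y`. -/
def statRep (x y : ℕ) (_ : Bool) (_ : ℕ) : ℕ := x + y

/-- Adjustment statistic: aggregate settled claims `X + (1-D)·Y + carry`. -/
def statSet (x y : ℕ) (d : Bool) (carry : ℕ) : ℕ := x + (if d then 0 else y) + carry

/-- Adjustment statistic: reported number of claims `1{X>0} + 1{Y>0}`. -/
def statRepN (x y : ℕ) (_ : Bool) (_ : ℕ) : ℕ :=
  (if 0 < x then 1 else 0) + (if 0 < y then 1 else 0)

/-- Adjustment statistic: settled number of claims
`1{X>0} + 1{Y>0 and not delayed} + 1{delayed by-claim from the previous period}`. -/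
def statSetN (x y : ℕ) (d : Bool) (carry : ℕ) : ℕ :=
  (if 0 < x then 1 else 0) + (if 0 < y ∧ d = false then 1 else 0) +
    (if 0 < carry then 1 else 0)

/-!
Condition on the outcome `(x, y, d)` of the first period. The reported number of claims does
not see the pending by-claim, so from a nonnegative surplus `u` with pending by-claim `k` the
ruin probability depends only on `u - k`: a delayed by-claim `y` that the surplus `m - x` left
after the first period (where `m = c_i - z`) can absorb acts like an immediate payment, while
an excess `y - (m - x) > 0` turns the state into the auxiliary model started from surplus `0`,
in which ruin is certain once the up-front by-claim exceeds the next premium. Splitting the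
first-period outcomes into `x = 0`, `y = 0`, `x + y ≤ m`, `x ≤ m < x + y` and `m < x` yields
the terms of the recursion.
-/

end DelayedClaims

open Finset

theorem Summable.mul_of_nonneg_of_le_one {ι : Type*} {p g : ι → ℝ} (hp : Summable p)
    (hp0 : 0 ≤ p) (hg0 : 0 ≤ g) (hg1 : g ≤ 1) : Summable fun i => p i * g i :=
  hp.of_nonneg_of_le (fun i => mul_nonneg (hp0 i) (hg0 i))
    (fun i => mul_le_of_le_one_right (hp0 i) (hg1 i))

theorem hasSum_prod_pi_fin {α : Type*} {p : α → ℝ} {s : ℝ} (hp0 : 0 ≤ p) (hp : HasSum p s)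
    (n : ℕ) : HasSum (fun ω : Fin n → α => ∏ k, p (ω k)) (s ^ n) := by
  induction n with
  | zero => simp
  | succ n ih =>
    have hprod : 0 ≤ fun ω : Fin n → α => ∏ k, p (ω k) := fun ω =>
      prod_nonneg fun k _ => hp0 (ω k)
    have hsum := Summable.mul_of_nonneg hp.summable ih.summable hp0 hprod
    have h := HasSum.mul hp ih hsum
    rw [← (Fin.consEquiv fun _ => α).hasSum_iff, pow_succ']
    refine h.congr_fun fun x => ?_
    simp [Fin.consEquiv, Fin.prod_univ_succ]

theorem tsum_succ_eq_sum_Icc_add_tsum {α : Type*} [AddCommGroup α] [TopologicalSpace α]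
    [IsTopologicalAddGroup α] [T2Space α] {g : ℕ → α} (hg : Summable fun k => g (k + 1))
    (N : ℕ) : ∑' k, g (k + 1) = ∑ k ∈ Icc 1 N, g k + ∑' k, g (N + 1 + k) := by
  rw [← hg.sum_add_tsum_nat_add N]
  congr 1
  · rw [← Ico_add_one_right_eq_Icc, sum_Ico_eq_sum_range]
    simp [add_comm]
  · simp only [add_comm, add_left_comm, add_assoc]

theorem tsum_tsum_eq_regions {E : Type*} [NormedAddCommGroup E] [CompleteSpace E]
    {F : ℕ → ℕ → E} (hF : Summable fun p : ℕ × ℕ => F p.1 p.2)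
    (hF0 : ∀ y, 0 < y → F 0 y = 0) (m : ℕ) :
    ∑' x, ∑' y, F x y = F 0 0 + ∑ x ∈ Icc 1 m, F x 0
      + ∑ x ∈ Icc 1 (m - 1), ∑ y ∈ Icc 1 (m - x), F x y
      + ∑' k, ∑ x ∈ Icc 1 m, F x (k + 1 + m - x)
      + ∑' k, ∑' y, F (m + 1 + k) y := by
  have hrow (x : ℕ) : Summable (F x) := hF.prod_factor x
  have hrow_split (x : ℕ) (hx : x ∈ Icc 1 m) : ∑' y, F x y =
      F x 0 + ∑ y ∈ Icc 1 (m - x), F x y + ∑' k, F x (k + 1 + m - x) := by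
    rw [(hrow x).tsum_eq_zero_add, add_assoc,
      tsum_succ_eq_sum_Icc_add_tsum ((summable_nat_add_iff 1).2 (hrow x)) (m - x)]
    have hk (k : ℕ) : m - x + 1 + k = k + 1 + m - x := by simp only [mem_Icc] at hx; omega
    simp only [hk]
  have hinner : ∑ x ∈ Icc 1 m, ∑ y ∈ Icc 1 (m - x), F x y =
      ∑ x ∈ Icc 1 (m - 1), ∑ y ∈ Icc 1 (m - x), F x y := by
    refine (sum_subset (Icc_subset_Icc_right (Nat.sub_le m 1)) fun x hx hx' => ?_).symm
    simp only [mem_Icc] at hx hx'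
    rw [show m - x = 0 by omega, Icc_eq_empty_of_lt zero_lt_one, sum_empty]
  have htail (x : ℕ) (hx : x ∈ Icc 1 m) : Summable fun k => F x (k + 1 + m - x) :=
    (hrow x).comp_injective fun a b hab => by simp only [mem_Icc] at hx; omega
  rw [hF.prod.tsum_eq_zero_add, tsum_eq_single 0 fun y hy => hF0 y (Nat.pos_of_ne_zero hy),
    tsum_succ_eq_sum_Icc_add_tsum ((summable_nat_add_iff 1).2 hF.prod) m,
    sum_congr rfl hrow_split, sum_add_distrib, sum_add_distrib, hinner,
    Summable.tsum_finsetSum htail]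
  abel

namespace DelayedClaims

section ClaimLaw

variable {f : ℕ → ℕ → ℝ} {q : ℝ}

theorem w_nonneg (hf0 : ∀ x y, 0 ≤ f x y) (hq0 : 0 ≤ q) (hq1 : q ≤ 1) : 0 ≤ w f q :=
  fun _ => mul_nonneg (hf0 _ _) (by split_ifs <;> linarith)

theorem hasSum_w (hf0 : ∀ x y, 0 ≤ f x y) (hf : HasSum (fun p : ℕ × ℕ => f p.1 p.2) 1)
    (hq0 : 0 ≤ q) (hq1 : q ≤ 1) : HasSum (w f q) 1 := by
  set d : Bool → ℝ := fun b => if b then q else 1 - q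
  have hd : HasSum d 1 := by simpa [d] using hasSum_fintype d
  have hd0 : 0 ≤ d := fun b => by
    cases b <;> simp only [Pi.zero_apply, Bool.false_eq_true, ↓reduceIte, d] <;> linarith
  have h := HasSum.mul hf hd
    (Summable.mul_of_nonneg hf.summable hd.summable (fun p => hf0 p.1 p.2) hd0)
  rw [one_mul] at h
  exact (Equiv.prodAssoc ℕ ℕ Bool).hasSum_iff.1 h

theorem tsum_w_mul {g : ℕ × ℕ × Bool → ℝ} (h : Summable fun a => w f q a * g a) :
    ∑' a, w f q a * g a =
      ∑' x, ∑' y, ((1 - q) * g (x, y, false) + q * g (x, y, true)) * f x y := by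
  rw [h.tsum_prod]
  refine tsum_congr fun x => ?_
  rw [(h.prod_factor x).tsum_prod]
  refine tsum_congr fun y => ?_
  simp only [tsum_bool, w, Bool.false_eq_true, if_false, if_true]
  ring

theorem pathWeight_nonneg (hw0 : 0 ≤ w f q) (n : ℕ) : 0 ≤ pathWeight f q n :=
  fun _ => prod_nonneg fun _ _ => hw0 _

theorem hasSum_pathWeight (hw0 : 0 ≤ w f q) (hw : HasSum (w f q) 1) (n : ℕ) :
    HasSum (pathWeight f q n) 1 := by
  have h := hasSum_prod_pi_fin hw0 hw n
  rwa [one_pow] at h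

theorem pathWeight_cons (n : ℕ) (a : ℕ × ℕ × Bool) (ω : Fin n → ℕ × ℕ × Bool) :
    pathWeight f q (n + 1) (Fin.cons a ω) = w f q a * pathWeight f q n ω := by
  simp [pathWeight, Fin.prod_univ_succ]

theorem xi_nonneg (hf0 : ∀ x y, 0 ≤ f x y) (y m : ℕ) : 0 ≤ xi f y m :=
  sum_nonneg fun _ _ => hf0 _ _

theorem summable_xi (hf : Summable fun p : ℕ × ℕ => f p.1 p.2) (m : ℕ) :
    Summable fun k => xi f (k + 1) m :=
  summable_sum fun x hx => (hf.prod_factor x).comp_injective (i := fun k => k + 1 + m - x)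
    fun a b hab => by simp only [mem_Icc] at hx; dsimp only at hab; omega

end ClaimLaw

def settled (a : ℕ × ℕ × Bool) (k : ℕ) : ℤ := a.1 + (if a.2.2 then 0 else (a.2.1 : ℤ)) + k

def delayed (a : ℕ × ℕ × Bool) : ℕ := if a.2.2 then a.2.1 else 0

def psiAfter (l : ℕ) (c : Fin l → ℕ) (T : Fin l → ℕ → Fin l)
    (stat : ℕ → ℕ → Bool → ℕ → ℕ) (f : ℕ → ℕ → ℝ) (q : ℝ)
    (i : Fin l) (u : ℤ) (k n : ℕ) (a : ℕ × ℕ × Bool) : ℝ :=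
  psiAux l c T stat f q (T i (stat a.1 a.2.1 a.2.2 k)) (u + c i - settled a k) (delayed a) n

def psiAfterAvg (l : ℕ) (c : Fin l → ℕ) (T : Fin l → ℕ → Fin l)
    (stat : ℕ → ℕ → Bool → ℕ → ℕ) (f : ℕ → ℕ → ℝ) (q : ℝ)
    (i : Fin l) (u : ℤ) (k n x y : ℕ) : ℝ :=
  (1 - q) * psiAfter l c T stat f q i u k n (x, y, false) +
    q * psiAfter l c T stat f q i u k n (x, y, true)

section Ruin

variable {l : ℕ} {c : Fin l → ℕ} {T : Fin l → ℕ → Fin l} {stat : ℕ → ℕ → Bool → ℕ → ℕ}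
  {f : ℕ → ℕ → ℝ} {q : ℝ}

theorem ruined_cons (n : ℕ) (a : ℕ × ℕ × Bool) (ω : Fin n → ℕ × ℕ × Bool) (i : Fin l)
    (u : ℤ) (k : ℕ) :
    ruined l c T stat (n + 1) (Fin.cons a ω) i u k =
      if u + c i - settled a k < 0 then true
      else ruined l c T stat n ω (T i (stat a.1 a.2.1 a.2.2 k)) (u + c i - settled a k)
        (delayed a) := by
  simp only [ruined, Fin.cons_zero, Fin.cons_succ, settled, delayed]
  rfl

theorem psiAux_of_neg {i : Fin l} {u : ℤ} (hu : u < 0) (k n : ℕ) :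
    psiAux l c T stat f q i u k n = 1 :=
  if_pos hu

theorem psiAux_zero_horizon {i : Fin l} {u : ℤ} (hu : 0 ≤ u) (k : ℕ) :
    psiAux l c T stat f q i u k 0 = 0 := by
  simp [psiAux, not_lt.2 hu, ruined]

theorem psiAux_nonneg (hw0 : 0 ≤ w f q) (i : Fin l) (u : ℤ) (k n : ℕ) :
    0 ≤ psiAux l c T stat f q i u k n := by
  unfold psiAux
  split_ifs
  · exact zero_le_one
  · exact tsum_nonneg fun ω =>
      mul_nonneg (pathWeight_nonneg hw0 n ω) (by split_ifs <;> norm_num)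

theorem psiAux_le_one (hw0 : 0 ≤ w f q) (hw : HasSum (w f q) 1) (i : Fin l) (u : ℤ)
    (k n : ℕ) : psiAux l c T stat f q i u k n ≤ 1 := by
  unfold psiAux
  split_ifs
  · exact le_rfl
  · have hsum := (hasSum_pathWeight hw0 hw n).summable
    refine le_of_le_of_eq (Summable.tsum_le_tsum (fun ω => ?_) ?_ hsum)
      (hasSum_pathWeight hw0 hw n).tsum_eq
    · exact mul_le_of_le_one_right (pathWeight_nonneg hw0 n ω) (by split_ifs <;> norm_num)
    · exact hsum.mul_of_nonneg_of_le_one (pathWeight_nonneg hw0 n)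
        (fun _ => by dsimp only; split_ifs <;> norm_num)
        (fun _ => by dsimp only; split_ifs <;> norm_num)

theorem tsum_pathWeight_mul_ruined_cons (hw0 : 0 ≤ w f q) (hw : HasSum (w f q) 1)
    (i : Fin l) (u : ℤ) (k n : ℕ) (a : ℕ × ℕ × Bool) :
    ∑' ω, pathWeight f q n ω *
        (if ruined l c T stat (n + 1) (Fin.cons a ω) i u k then 1 else 0) =
      psiAfter l c T stat f q i u k n a := by
  simp only [psiAfter, psiAux, ruined_cons]
  by_cases h : u + c i - settled a k < 0
  · simp [h, (hasSum_pathWeight hw0 hw n).tsum_eq]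
  · simp [h]

theorem psiAux_succ (hw0 : 0 ≤ w f q) (hw : HasSum (w f q) 1) (i : Fin l) {u : ℤ}
    (hu : 0 ≤ u) (k n : ℕ) :
    psiAux l c T stat f q i u k (n + 1) = ∑' a, w f q a * psiAfter l c T stat f q i u k n a := by
  let e := Fin.consEquiv fun _ : Fin (n + 1) => ℕ × ℕ × Bool
  let ind : (ℕ × ℕ × Bool) × (Fin n → ℕ × ℕ × Bool) → ℝ := fun p =>
    if ruined l c T stat (n + 1) (Fin.cons p.1 p.2) i u k then 1 else 0
  have hsplit (p) : pathWeight f q (n + 1) (e p) *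
      (if ruined l c T stat (n + 1) (e p) i u k then 1 else 0) =
      w f q p.1 * (pathWeight f q n p.2 * ind p) := by
    simp only [e, ind, Fin.consEquiv, Equiv.coe_fn_mk, pathWeight_cons, mul_assoc]
  have hprod : Summable fun p : (ℕ × ℕ × Bool) × (Fin n → ℕ × ℕ × Bool) =>
      w f q p.1 * pathWeight f q n p.2 :=
    Summable.mul_of_nonneg hw.summable (hasSum_pathWeight hw0 hw n).summable hw0
      (pathWeight_nonneg hw0 n)
  have hsum : Summable fun p => w f q p.1 * (pathWeight f q n p.2 * ind p) := by
    refine (hprod.mul_of_nonneg_of_le_one ?_ ?_ ?_).congr fun _ => mul_assoc _ _ _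
    · exact fun p => mul_nonneg (hw0 _) (pathWeight_nonneg hw0 n _)
    all_goals intro p; dsimp only [ind]; split_ifs <;> norm_num
  rw [psiAux, if_neg (not_lt.2 hu), ← e.tsum_eq, tsum_congr hsplit, hsum.tsum_prod]
  refine tsum_congr fun a => ?_
  dsimp only [ind]
  rw [tsum_mul_left, tsum_pathWeight_mul_ruined_cons hw0 hw]

theorem psiAfterAvg_mem_Icc (hw0 : 0 ≤ w f q) (hw : HasSum (w f q) 1) (hq0 : 0 ≤ q)
    (hq1 : q ≤ 1) (i : Fin l) (u : ℤ) (k n x y : ℕ) :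
    psiAfterAvg l c T stat f q i u k n x y ∈ Set.Icc 0 1 := by
  have hmem (d : Bool) : psiAfter l c T stat f q i u k n (x, y, d) ∈ Set.Icc 0 1 :=
    ⟨psiAux_nonneg hw0 _ _ _ _, psiAux_le_one hw0 hw _ _ _ _⟩
  obtain ⟨ha0, ha1⟩ := hmem false
  obtain ⟨hb0, hb1⟩ := hmem true
  simp only [psiAfterAvg, Set.mem_Icc]
  constructor <;> nlinarith

theorem ruined_eq_of_sub_eq (hstat : ∀ x y d k k', stat x y d k = stat x y d k')
    (n : ℕ) (ω : Fin n → ℕ × ℕ × Bool) (i : Fin l) {u u' : ℤ} {k k' : ℕ}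
    (h : u - k = u' - k') : ruined l c T stat n ω i u k = ruined l c T stat n ω i u' k' := by
  cases n with
  | zero => rfl
  | succ n =>
    rw [← Fin.cons_self_tail ω, ruined_cons, ruined_cons, hstat _ _ _ k k',
      show u + c i - settled (ω 0) k = u' + c i - settled (ω 0) k' by
        simp only [settled]; linarith]

theorem psiAux_eq_of_sub_eq (hstat : ∀ x y d k k', stat x y d k = stat x y d k')
    (i : Fin l) {u u' : ℤ} (hu : 0 ≤ u) (hu' : 0 ≤ u') {k k' : ℕ} (h : u - k = u' - k')
    (n : ℕ) : psiAux l c T stat f q i u k n = psiAux l c T stat f q i u' k' n := by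
  simp only [psiAux, not_lt.2 hu, not_lt.2 hu', if_false, ruined_eq_of_sub_eq hstat _ _ i h]

theorem psiAux_eq_one_of_lt (hw0 : 0 ≤ w f q) (hw : HasSum (w f q) 1) {i : Fin l} {u : ℤ}
    (hu : 0 ≤ u) {k : ℕ} (h : u + c i < k) (n : ℕ) :
    psiAux l c T stat f q i u k (n + 1) = 1 := by
  have hruin (ω : Fin (n + 1) → ℕ × ℕ × Bool) : ruined l c T stat (n + 1) ω i u k = true := by
    rw [← Fin.cons_self_tail ω, ruined_cons, if_pos]
    simp only [settled]
    split_ifs <;> omega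
  simp [psiAux, not_lt.2 hu, hruin, (hasSum_pathWeight hw0 hw _).tsum_eq]

theorem summable_psiAux_mul_xi (hf0 : ∀ x y, 0 ≤ f x y)
    (hf : Summable fun p : ℕ × ℕ => f p.1 p.2) (hw0 : 0 ≤ w f q) (hw : HasSum (w f q) 1)
    (j : Fin l) (u : ℤ) (m n : ℕ) :
    Summable fun k => psiAux l c T stat f q j u (k + 1) n * xi f (k + 1) m :=
  ((summable_xi hf m).mul_of_nonneg_of_le_one (fun _ => xi_nonneg hf0 _ _)
    (fun _ => psiAux_nonneg hw0 _ _ _ _) (fun _ => psiAux_le_one hw0 hw _ _ _ _)).congr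
    fun _ => mul_comm _ _

theorem tsum_psiAux_mul_xi_eq (hf0 : ∀ x y, 0 ≤ f x y)
    (hf : Summable fun p : ℕ × ℕ => f p.1 p.2) (hw0 : 0 ≤ w f q) (hw : HasSum (w f q) 1)
    (j : Fin l) (m n : ℕ) :
    ∑' k, psiAux l c T stat f q j 0 (k + 1) (n + 1) * xi f (k + 1) m =
      ∑ y ∈ Icc 1 (c j), psiAux l c T stat f q j 0 y (n + 1) * xi f y m
        + ∑' k, xi f (c j + 1 + k) m := by
  rw [tsum_succ_eq_sum_Icc_add_tsum
    (g := fun y => psiAux l c T stat f q j 0 y (n + 1) * xi f y m)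
    (summable_psiAux_mul_xi hf0 hf hw0 hw j 0 m (n + 1)) (c j)]
  congr 1
  refine tsum_congr fun k => ?_
  rw [psiAux_eq_one_of_lt hw0 hw le_rfl (by omega), one_mul]

end Ruin

section ReportedNumber

variable {l : ℕ} {c : Fin l → ℕ} {T : Fin l → ℕ → Fin l} {f : ℕ → ℕ → ℝ} {q : ℝ}
  {i : Fin l} {m z : ℕ}

theorem psiAfter_statRepN (hm : c i = m + z) (n x y : ℕ) (d : Bool) :
    psiAfter l c T statRepN f q i 0 z n (x, y, d) =
      psiAux l c T statRepN f q (T i (statRepN x y d z))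
        ((m : ℤ) - x - if d then 0 else (y : ℤ)) (if d then y else 0) n := by
  simp only [psiAfter, settled, delayed, hm]
  congr 1
  push_cast
  ring

theorem psiAfterAvg_zero_zero (hm : c i = m + z) (n : ℕ) :
    psiAfterAvg l c T statRepN f q i 0 z n 0 0 = psi l c T statRepN f q (T i 0) m n := by
  simp only [psiAfterAvg, psiAfter_statRepN hm, statRepN, psi, lt_self_iff_false, ↓reduceIte,
    add_zero, Nat.cast_zero, sub_zero, Bool.false_eq_true]
  ring

theorem psiAfterAvg_pos_zero {x : ℕ} (hx : 1 ≤ x) (hxm : x ≤ m) (hm : c i = m + z) (n : ℕ) :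
    psiAfterAvg l c T statRepN f q i 0 z n x 0 =
      psi l c T statRepN f q (T i 1) (m - x : ℕ) n := by
  simp only [psiAfterAvg, psiAfter_statRepN hm, statRepN, psi, show 0 < x by omega,
    lt_self_iff_false, ↓reduceIte, add_zero, Bool.false_eq_true, Nat.cast_zero, sub_zero,
    Nat.cast_sub hxm]
  ring

theorem psiAfterAvg_of_add_le {x y : ℕ} (hx : 1 ≤ x) (hy : 1 ≤ y) (hxy : x + y ≤ m)
    (hm : c i = m + z) (n : ℕ) :
    psiAfterAvg l c T statRepN f q i 0 z n x y =
      psi l c T statRepN f q (T i 2) (m - x - y : ℕ) n := by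
  have hshift : psiAux l c T statRepN f q (T i 2) ((m : ℤ) - x) y n =
      psiAux l c T statRepN f q (T i 2) (m - x - y : ℕ) 0 n :=
    psiAux_eq_of_sub_eq (fun _ _ _ _ _ => rfl) _ (by omega) (by omega) (by push_cast; omega) n
  simp only [psiAfterAvg, psiAfter_statRepN hm, statRepN, psi, show 0 < x by omega,
    show 0 < y by omega, ↓reduceIte, Nat.reduceAdd, Bool.false_eq_true, sub_zero]
  rw [hshift, show (m : ℤ) - x - y = ((m - x - y : ℕ) : ℤ) by omega]
  ring

theorem psiAfterAvg_of_lt_add {x : ℕ} (hx : 1 ≤ x) (hxm : x ≤ m) (hm : c i = m + z)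
    (n k : ℕ) :
    psiAfterAvg l c T statRepN f q i 0 z n x (k + 1 + m - x) =
      1 - q + q * psiAux l c T statRepN f q (T i 2) 0 (k + 1) n := by
  have hshift : psiAux l c T statRepN f q (T i 2) ((m : ℤ) - x) (k + 1 + m - x) n =
      psiAux l c T statRepN f q (T i 2) 0 (k + 1) n :=
    psiAux_eq_of_sub_eq (fun _ _ _ _ _ => rfl) _ (by omega) le_rfl (by push_cast; omega) n
  simp only [psiAfterAvg, psiAfter_statRepN hm, statRepN, show 0 < x by omega, tsub_pos_iff_lt,
    show x < k + 1 + m by omega, ↓reduceIte, Nat.reduceAdd, Bool.false_eq_true, sub_zero]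
  rw [hshift, psiAux_of_neg (by omega)]
  ring

theorem psiAfterAvg_of_lt {x : ℕ} (hx : m < x) (hm : c i = m + z) (n y : ℕ) :
    psiAfterAvg l c T statRepN f q i 0 z n x y = 1 := by
  simp only [psiAfterAvg, psiAfter_statRepN hm]
  rw [psiAux_of_neg (by omega), psiAux_of_neg (by omega)]
  ring

theorem tsum_sum_psiAfterAvg_mul_of_lt_add (hf0 : ∀ x y, 0 ≤ f x y)
    (hf : Summable fun p : ℕ × ℕ => f p.1 p.2) (hw0 : 0 ≤ w f q) (hw : HasSum (w f q) 1)
    (hm : c i = m + z) (n : ℕ) :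
    ∑' k, ∑ x ∈ Icc 1 m,
        psiAfterAvg l c T statRepN f q i 0 z n x (k + 1 + m - x) * f x (k + 1 + m - x) =
      q * ∑' k, psiAux l c T statRepN f q (T i 2) 0 (k + 1) n * xi f (k + 1) m
        + (1 - q) * ∑' k, xi f (k + 1) m := by
  have hterm (k : ℕ) : ∑ x ∈ Icc 1 m,
      psiAfterAvg l c T statRepN f q i 0 z n x (k + 1 + m - x) * f x (k + 1 + m - x) =
      q * (psiAux l c T statRepN f q (T i 2) 0 (k + 1) n * xi f (k + 1) m)
        + (1 - q) * xi f (k + 1) m := by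
    calc _ = ∑ x ∈ Icc 1 m, (1 - q + q * psiAux l c T statRepN f q (T i 2) 0 (k + 1) n) *
          f x (k + 1 + m - x) := sum_congr rfl fun x hx => by
            rw [mem_Icc] at hx
            rw [psiAfterAvg_of_lt_add hx.1 hx.2 hm]
      _ = _ := by rw [← mul_sum, xi]; ring
  rw [tsum_congr hterm,
    ((summable_psiAux_mul_xi hf0 hf hw0 hw (T i 2) 0 m n).mul_left q).tsum_add
      ((summable_xi hf m).mul_left _),
    tsum_mul_left, tsum_mul_left]

theorem psiAux_statRepN_succ (hf0 : ∀ x y, 0 ≤ f x y)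
    (hf : HasSum (fun p : ℕ × ℕ => f p.1 p.2) 1) (hfdeg : ∀ y, 0 < y → f 0 y = 0)
    (hq0 : 0 ≤ q) (hq1 : q ≤ 1) (hm : c i = m + z) (n : ℕ) :
    psiAux l c T statRepN f q i 0 z (n + 1) =
      psi l c T statRepN f q (T i 0) m n * f 0 0
      + ∑ x ∈ Icc 1 m, psi l c T statRepN f q (T i 1) (m - x : ℕ) n * f x 0
      + ∑ x ∈ Icc 1 (m - 1), ∑ y ∈ Icc 1 (m - x),
          psi l c T statRepN f q (T i 2) (m - x - y : ℕ) n * f x y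
      + (q * ∑' k, psiAux l c T statRepN f q (T i 2) 0 (k + 1) n * xi f (k + 1) m
        + (1 - q) * ∑' k, xi f (k + 1) m)
      + ∑' k, fX f (m + 1 + k) := by
  have hw0 := w_nonneg hf0 hq0 hq1
  have hw := hasSum_w hf0 hf hq0 hq1
  have havg := psiAfterAvg_mem_Icc (c := c) (T := T) (stat := statRepN) hw0 hw hq0 hq1 i 0 z n
  have hF : Summable fun p : ℕ × ℕ =>
      psiAfterAvg l c T statRepN f q i 0 z n p.1 p.2 * f p.1 p.2 :=
    (hf.summable.mul_of_nonneg_of_le_one (fun p => hf0 p.1 p.2) (fun p => (havg _ _).1)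
      (fun p => (havg _ _).2)).congr fun _ => mul_comm _ _
  have hg : Summable fun a => w f q a * psiAfter l c T statRepN f q i 0 z n a :=
    hw.summable.mul_of_nonneg_of_le_one hw0 (fun _ => psiAux_nonneg hw0 _ _ _ _)
      (fun _ => psiAux_le_one hw0 hw _ _ _ _)
  have hline : ∑ x ∈ Icc 1 m, psiAfterAvg l c T statRepN f q i 0 z n x 0 * f x 0 =
      ∑ x ∈ Icc 1 m, psi l c T statRepN f q (T i 1) (m - x : ℕ) n * f x 0 :=
    sum_congr rfl fun x hx => by
      rw [mem_Icc] at hx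
      rw [psiAfterAvg_pos_zero hx.1 hx.2 hm]
  have hinner : ∑ x ∈ Icc 1 (m - 1), ∑ y ∈ Icc 1 (m - x),
        psiAfterAvg l c T statRepN f q i 0 z n x y * f x y =
      ∑ x ∈ Icc 1 (m - 1), ∑ y ∈ Icc 1 (m - x),
        psi l c T statRepN f q (T i 2) (m - x - y : ℕ) n * f x y :=
    sum_congr rfl fun x hx => sum_congr rfl fun y hy => by
      simp only [mem_Icc] at hx hy
      rw [psiAfterAvg_of_add_le hx.1 hy.1 (by omega) hm]
  have hbeyond : ∑' k, ∑' y, psiAfterAvg l c T statRepN f q i 0 z n (m + 1 + k) y *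
      f (m + 1 + k) y = ∑' k, fX f (m + 1 + k) :=
    tsum_congr fun k => tsum_congr fun y => by rw [psiAfterAvg_of_lt (by omega) hm, one_mul]
  rw [psiAux_succ hw0 hw i le_rfl, tsum_w_mul hg]
  refine (tsum_tsum_eq_regions
    (F := fun x y => psiAfterAvg l c T statRepN f q i 0 z n x y * f x y)
    hF (fun y hy => by simp [hfdeg y hy]) m).trans ?_
  rw [psiAfterAvg_zero_zero hm, hline, hinner,
    tsum_sum_psiAfterAvg_mul_of_lt_add hf0 hf.summable hw0 hw hm, hbeyond]

end ReportedNumber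

theorem corollary3_reported_number_general
    (l : ℕ) (c : Fin l → ℕ)
    (f : ℕ → ℕ → ℝ) (hfnn : ∀ x y, 0 ≤ f x y)
    (hfsum : ∑' p : ℕ × ℕ, f p.1 p.2 = 1)
    (hfdeg : ∀ y : ℕ, 0 < y → f 0 y = 0)
    (q : ℝ) (hq0 : 0 ≤ q) (hq1 : q ≤ 1)
    (t : Fin l → Fin l → ℕ → ℝ) (T : Fin l → ℕ → Fin l)
    (hT : ∀ i j s, t i j s = if j = T i s then (1 : ℝ) else 0)
    (i : Fin l) (z : ℕ) (hz2 : z ≤ c i) (n : ℕ) (hn : 1 ≤ n) :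
    psiAux l c T statRepN f q i 0 z (n + 1) =
        (∑ j : Fin l, t i j 0 * psi l c T statRepN f q j ((c i - z : ℕ) : ℤ) n * f 0 0)
      + (∑ j : Fin l, t i j 1 * (∑ x ∈ Finset.Icc 1 (c i - z),
          psi l c T statRepN f q j ((c i - z - x : ℕ) : ℤ) n * f x 0))
      + (∑ j : Fin l, t i j 2 *
          ((∑ x ∈ Finset.Icc 1 (c i - z - 1), ∑ y ∈ Finset.Icc 1 (c i - z - x),
              psi l c T statRepN f q j ((c i - z - x - y : ℕ) : ℤ) n * f x y)
            + q * (∑ y ∈ Finset.Icc 1 (c j),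
                psiAux l c T statRepN f q j 0 y n * xi f y (c i - z))
            + q * (∑' k : ℕ, xi f (c j + 1 + k) (c i - z))))
      + (1 - q) * (∑' k : ℕ, xi f (k + 1) (c i - z))
      + (∑' k : ℕ, fX f (c i - z + 1 + k)) ∧
    psiAux l c T statRepN f q i 0 z 1 =
      (1 - q) * (∑' k : ℕ, xi f (k + 1) (c i - z))
      + (∑' k : ℕ, fX f (c i - z + 1 + k)) := by
  obtain ⟨m, hm⟩ : ∃ m, c i = m + z := ⟨c i - z, by omega⟩
  rw [show c i - z = m by omega]
  have hf : HasSum (fun p : ℕ × ℕ => f p.1 p.2) 1 := by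
    refine hfsum ▸ Summable.hasSum (by_contra fun h => ?_)
    simp [tsum_eq_zero_of_not_summable h] at hfsum
  have hw0 := w_nonneg hfnn hq0 hq1
  have hw := hasSum_w hfnn hf hq0 hq1
  have hsel (s : ℕ) (A : Fin l → ℝ) : ∑ j, t i j s * A j = A (T i s) := by simp [hT]
  refine ⟨?_, ?_⟩
  · obtain ⟨n, rfl⟩ : ∃ n', n = n' + 1 := ⟨n - 1, by omega⟩
    rw [psiAux_statRepN_succ hfnn hf hfdeg hq0 hq1 hm, ← sum_mul, hsel, hsel, hsel,
      tsum_psiAux_mul_xi_eq hfnn hf.summable hw0 hw]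
    ring
  · rw [psiAux_statRepN_succ hfnn hf hfdeg hq0 hq1 hm]
    simp [psi, psiAux_zero_horizon]

/-- Corollary 3: recursion for ψ'_i(0; z, ·) when premiums are adjusted according to
the reported number of claims. -/
theorem corollary3_reported_number
    (l : ℕ) (c : Fin l → ℕ) (hcpos : ∀ i, 0 < c i) (hcmono : StrictMono c)
    (f : ℕ → ℕ → ℝ) (hfnn : ∀ x y, 0 ≤ f x y)
    (hfsum : ∑' p : ℕ × ℕ, f p.1 p.2 = 1)
    (hfdeg : ∀ y : ℕ, 0 < y → f 0 y = 0)
    (q : ℝ) (hq0 : 0 ≤ q) (hq1 : q ≤ 1)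
    (t : Fin l → Fin l → ℕ → ℝ) (T : Fin l → ℕ → Fin l)
    (hT : ∀ i j s, t i j s = if j = T i s then (1 : ℝ) else 0)
    (i : Fin l) (z : ℕ) (hz1 : 0 < z) (hz2 : z ≤ c i) (n : ℕ) (hn : 1 ≤ n) :
    psiAux l c T statRepN f q i 0 z (n + 1) =
        (∑ j : Fin l, t i j 0 * psi l c T statRepN f q j ((c i - z : ℕ) : ℤ) n * f 0 0)
      + (∑ j : Fin l, t i j 1 * (∑ x ∈ Finset.Icc 1 (c i - z),
          psi l c T statRepN f q j ((c i - z - x : ℕ) : ℤ) n * f x 0))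
      + (∑ j : Fin l, t i j 2 *
          ((∑ x ∈ Finset.Icc 1 (c i - z - 1), ∑ y ∈ Finset.Icc 1 (c i - z - x),
              psi l c T statRepN f q j ((c i - z - x - y : ℕ) : ℤ) n * f x y)
            + q * (∑ y ∈ Finset.Icc 1 (c j),
                psiAux l c T statRepN f q j 0 y n * xi f y (c i - z))
            + q * (∑' k : ℕ, xi f (c j + 1 + k) (c i - z))))
      + (1 - q) * (∑' k : ℕ, xi f (k + 1) (c i - z))
      + (∑' k : ℕ, fX f (c i - z + 1 + k)) ∧
    psiAux l c T statRepN f q i 0 z 1 =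
      (1 - q) * (∑' k : ℕ, xi f (k + 1) (c i - z))
      + (∑' k : ℕ, fX f (c i - z + 1 + k)) :=
  corollary3_reported_number_general l c f hfnn hfsum hfdeg q hq0 hq1 t T hT i z hz2 n hn

end DelayedClaims
end
end

section
/- f^L is a probability mass function on ℕ×ℕ, and if (X,Y) is a random pair with joint pmf f^L, then: the marginal pmf of X is f_X(x) = (1/6)(5/6)^x for all x ∈ ℕ; the marginal pmf of Y is f_Y(y) = (1/6)·1{y=0} + (5/6)(1/7)(6/7)^y for all y ∈ ℕ; E[X] = E[Y] = 5; and the Pearson correlation coefficient of X and Y equals √3/12 (≈ 0.1443). -/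
open scoped BigOperators

noncomputable section

namespace DelayedClaims

/-- High-correlation joint pmf: `f^H(x,x) = (1/6)(5/6)^x` and `f^H(x,y) = 0` for `x ≠ y`. -/
def fH (x y : ℕ) : ℝ := if x = y then (1 / 6 : ℝ) * (5 / 6) ^ x else 0

/-- Low-correlation joint pmf: `f^L(0,0) = 1/6`, `f^L(x,y) = (1/6)(5/6)^x (1/7)(6/7)^y`
for `x ≥ 1`, `y ≥ 0`, and `f^L(0,y) = 0` for `y ≥ 1`. -/
def fL (x y : ℕ) : ℝ :=
  if x = 0 then (if y = 0 then (1 / 6 : ℝ) else 0)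
  else (1 / 6 : ℝ) * (5 / 6) ^ x * ((1 / 7) * (6 / 7) ^ y)

/-- Moderate-correlation joint pmf: `f^M = (1/2) f^H + (1/2) f^L`. -/
def fM (x y : ℕ) : ℝ := (1 / 2) * fH x y + (1 / 2) * fL x y

/-- Expectation of `g(X,Y)` when `(X,Y)` has joint pmf `f`. -/
def Emom (f g : ℕ → ℕ → ℝ) : ℝ := ∑' p : ℕ × ℕ, g p.1 p.2 * f p.1 p.2

/-- Covariance of `g(X,Y)` and `h(X,Y)` when `(X,Y)` has joint pmf `f`. -/
def covM (f g h : ℕ → ℕ → ℝ) : ℝ :=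
  Emom f (fun x y => g x y * h x y) - Emom f g * Emom f h

/-- Variance of `g(X,Y)` when `(X,Y)` has joint pmf `f`. -/
def varM (f g : ℕ → ℕ → ℝ) : ℝ := Emom f (fun x y => g x y ^ 2) - (Emom f g) ^ 2

/-- Pearson correlation coefficient of `g(X,Y)` and `h(X,Y)` when `(X,Y)` has
joint pmf `f`. -/
def pearson (f g h : ℕ → ℕ → ℝ) : ℝ :=
  covM f g h / (Real.sqrt (varM f g) * Real.sqrt (varM f h))

/-- The first coordinate `X` as a real-valued statistic. -/
def projX : ℕ → ℕ → ℝ := fun x _ => (x : ℝ)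

/-- The second coordinate `Y` as a real-valued statistic. -/
def projY : ℕ → ℕ → ℝ := fun _ y => (y : ℝ)

/-- The indicator `1{X > 0}` as a real-valued statistic. -/
def indX : ℕ → ℕ → ℝ := fun x _ => if 0 < x then 1 else 0

/-- The indicator `1{Y > 0}` as a real-valued statistic. -/
def indY : ℕ → ℕ → ℝ := fun _ y => if 0 < y then 1 else 0

/-!
`f^L` is the atom `1/6` at `(0, 0)` plus the product `a(x) b(y)` of `a(x) = (1/6)(5/6)^x` for
`x ≥ 1` (with `a(0) = 0`) and the geometric pmf `b(y) = (1/7)(6/7)^y` (`fLFactorX`,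
`fLFactorY`). Hence every moment `E[u(X) v(Y)]` equals `(∑ u a) (∑ v b) + u(0) v(0) / 6`, a
product of two geometric series.
This gives `E X = E Y = 5`, `E[XY] = 30`, `E[X²] = 55` and `E[Y²] = 65`, so `Cov(X, Y) = 5`,
`Var X = 30`, `Var Y = 40` and the correlation is `5 / √1200 = √3 / 12`.
-/

theorem hasSum_sq_mul_geometric_of_norm_lt_one {𝕜 : Type*} [NormedField 𝕜] {r : 𝕜}
    (hr : ‖r‖ < 1) :
    HasSum (fun n : ℕ => (n : 𝕜) ^ 2 * r ^ n) (r * (1 + r) / (1 - r) ^ 3) := by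
  have h1r : (1 : 𝕜) - r ≠ 0 := sub_ne_zero.mpr (by rintro rfl; simp at hr)
  have hchoose (n : ℕ) : ((n + 2).choose 2 : 𝕜) * 2 = n ^ 2 + 3 * n + 2 := by
    have : (n + 2).choose 2 * 2 = n ^ 2 + 3 * n + 2 := by
      rw [Nat.choose_two_right, Nat.div_mul_cancel (Nat.even_mul_pred_self _).two_dvd]
      show (n + 2) * (n + 1) = _
      ring
    simpa using congrArg (Nat.cast : ℕ → 𝕜) this
  convert! ((hasSum_choose_mul_geometric_of_norm_lt_one 2 hr).mul_right 2).sub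
    (((hasSum_coe_mul_geometric_of_norm_lt_one hr).mul_left 3).add
      ((hasSum_geometric_of_norm_lt_one hr).mul_left 2)) using 1
  · funext n
    rw [mul_right_comm, hchoose]; ring
  · field_simp; ring

def fLFactorX (x : ℕ) : ℝ := if x = 0 then 0 else 1 / 6 * (5 / 6) ^ x

def fLFactorY (y : ℕ) : ℝ := 1 / 7 * (6 / 7) ^ y

theorem fL_eq_factor_mul_factor_add (x y : ℕ) :
    fL x y = fLFactorX x * fLFactorY y + if x = 0 ∧ y = 0 then 1 / 6 else 0 := by
  unfold fL fLFactorX fLFactorY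
  by_cases hx : x = 0 <;> by_cases hy : y = 0 <;> simp [hx, hy]

theorem HasSum.mul_fLFactorX {u : ℕ → ℝ} {s : ℝ}
    (h : HasSum (fun x => u x * (5 / 6) ^ x) s) :
    HasSum (fun x => u x * fLFactorX x) ((s - u 0) / 6) := by
  convert! ((h.sub (hasSum_ite_eq 0 (u 0))).div_const 6) using 1
  funext x
  rcases eq_or_ne x 0 with rfl | hx
  · simp [fLFactorX]
  · rw [fLFactorX, if_neg hx, if_neg hx, sub_zero]
    ring

theorem HasSum.mul_fLFactorY {v : ℕ → ℝ} {s : ℝ}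
    (h : HasSum (fun y => v y * (6 / 7) ^ y) s) :
    HasSum (fun y => v y * fLFactorY y) (s / 7) := by
  convert! h.div_const 7 using 1
  funext y
  simp only [fLFactorY]; ring

theorem hasSum_mul_fL {u v : ℕ → ℝ} {su sv : ℝ}
    (hu : HasSum (fun x => u x * fLFactorX x) su) (hv : HasSum (fun y => v y * fLFactorY y) sv) :
    HasSum (fun p : ℕ × ℕ => u p.1 * v p.2 * fL p.1 p.2) (su * sv + u 0 * v 0 / 6) := by
  have hprod := hu.mul hv <| summable_mul_of_summable_norm (R := ℝ)
    (summable_norm_iff.mpr hu.summable) (summable_norm_iff.mpr hv.summable)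
  have hsplit : (fun p : ℕ × ℕ => u p.1 * v p.2 * fL p.1 p.2) = fun p =>
      u p.1 * fLFactorX p.1 * (v p.2 * fLFactorY p.2) +
        if p = (0, 0) then u 0 * v 0 / 6 else 0 := by
    funext ⟨x, y⟩
    rw [fL_eq_factor_mul_factor_add]
    by_cases h : x = 0 ∧ y = 0
    · obtain ⟨rfl, rfl⟩ := h
      rw [if_pos ⟨rfl, rfl⟩, if_pos rfl]
      ring
    · simp only [if_neg h, Prod.mk.injEq]; ring
  rw [hsplit]
  exact hprod.add (hasSum_ite_eq _ _)

theorem emom_fL_of_eq_mul {g : ℕ → ℕ → ℝ} {u v : ℕ → ℝ} {su sv : ℝ}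
    (hg : ∀ x y, g x y = u x * v y) (hu : HasSum (fun x => u x * fLFactorX x) su)
    (hv : HasSum (fun y => v y * fLFactorY y) sv) :
    Emom fL g = su * sv + u 0 * v 0 / 6 := by
  simp only [Emom, hg]
  exact (hasSum_mul_fL hu hv).tsum_eq

theorem hasSum_fLFactorX : HasSum fLFactorX (5 / 6) := by
  convert! HasSum.mul_fLFactorX (u := 1)
    (by simpa using hasSum_geometric_of_lt_one (r := (5 / 6 : ℝ)) (by norm_num) (by norm_num))
    using 1
  · simp
  · norm_num

theorem hasSum_coe_mul_fLFactorX : HasSum (fun x : ℕ => (x : ℝ) * fLFactorX x) 5 := by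
  convert! HasSum.mul_fLFactorX (hasSum_coe_mul_geometric_of_norm_lt_one
    (r := (5 / 6 : ℝ)) (by norm_num [abs_of_pos])) using 1
  norm_num

theorem hasSum_sq_mul_fLFactorX : HasSum (fun x : ℕ => (x : ℝ) ^ 2 * fLFactorX x) 55 := by
  convert! HasSum.mul_fLFactorX (hasSum_sq_mul_geometric_of_norm_lt_one
    (r := (5 / 6 : ℝ)) (by norm_num [abs_of_pos])) using 1
  norm_num

theorem hasSum_fLFactorY : HasSum fLFactorY 1 := by
  convert! HasSum.mul_fLFactorY (v := 1)
    (by simpa using hasSum_geometric_of_lt_one (r := (6 / 7 : ℝ)) (by norm_num) (by norm_num))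
    using 1
  · simp
  · norm_num

theorem hasSum_coe_mul_fLFactorY : HasSum (fun y : ℕ => (y : ℝ) * fLFactorY y) 6 := by
  convert! HasSum.mul_fLFactorY (hasSum_coe_mul_geometric_of_norm_lt_one
    (r := (6 / 7 : ℝ)) (by norm_num [abs_of_pos])) using 1
  norm_num

theorem hasSum_sq_mul_fLFactorY : HasSum (fun y : ℕ => (y : ℝ) ^ 2 * fLFactorY y) 78 := by
  convert! HasSum.mul_fLFactorY (hasSum_sq_mul_geometric_of_norm_lt_one
    (r := (6 / 7 : ℝ)) (by norm_num [abs_of_pos])) using 1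
  norm_num

theorem fL_marginal_fst (x : ℕ) : ∑' y, fL x y = 1 / 6 * (5 / 6) ^ x := by
  have h : HasSum (fun y => fL x y) (fLFactorX x * 1 + if x = 0 then 1 / 6 else 0) := by
    simp only [fL_eq_factor_mul_factor_add, and_comm (a := x = 0), ite_and]
    exact (hasSum_fLFactorY.mul_left _).add (hasSum_ite_eq 0 _)
  rw [h.tsum_eq]
  by_cases hx : x = 0 <;> simp [fLFactorX, hx]

theorem fL_marginal_snd (y : ℕ) :
    ∑' x, fL x y = 1 / 6 * (if y = 0 then 1 else 0) + 5 / 6 * (1 / 7 * (6 / 7) ^ y) := by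
  have h : HasSum (fun x => fL x y) (5 / 6 * fLFactorY y + if y = 0 then 1 / 6 else 0) := by
    simp only [fL_eq_factor_mul_factor_add, ite_and]
    exact (hasSum_fLFactorX.mul_right _).add (hasSum_ite_eq 0 _)
  rw [h.tsum_eq, fLFactorY]
  split_ifs <;> ring

theorem fL_nonneg (x y : ℕ) : 0 ≤ fL x y := by
  unfold fL
  split_ifs <;> positivity

theorem tsum_fL : ∑' p : ℕ × ℕ, fL p.1 p.2 = 1 := by
  simpa using (hasSum_mul_fL (u := 1) (v := 1) (by simpa using hasSum_fLFactorX)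
    (by simpa using hasSum_fLFactorY)).tsum_eq.trans (by norm_num)

theorem emom_fL_projX : Emom fL projX = 5 := by
  rw [emom_fL_of_eq_mul (g := projX) (fun x _ => (mul_one (x : ℝ)).symm)
    hasSum_coe_mul_fLFactorX (by simpa using hasSum_fLFactorY)]
  norm_num

theorem emom_fL_projY : Emom fL projY = 5 := by
  rw [emom_fL_of_eq_mul (g := projY) (fun _ y => (one_mul (y : ℝ)).symm)
    (by simpa using hasSum_fLFactorX) hasSum_coe_mul_fLFactorY]
  norm_num

theorem emom_fL_projX_mul_projY : Emom fL (fun x y => projX x y * projY x y) = 30 := by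
  rw [emom_fL_of_eq_mul (g := fun x y => projX x y * projY x y) (fun _ _ => rfl)
    hasSum_coe_mul_fLFactorX hasSum_coe_mul_fLFactorY]
  norm_num

theorem emom_fL_projX_sq : Emom fL (fun x y => projX x y ^ 2) = 55 := by
  rw [emom_fL_of_eq_mul (g := fun x y => projX x y ^ 2) (fun x _ => (mul_one ((x : ℝ) ^ 2)).symm)
    hasSum_sq_mul_fLFactorX (by simpa using hasSum_fLFactorY)]
  norm_num

theorem emom_fL_projY_sq : Emom fL (fun x y => projY x y ^ 2) = 65 := by
  rw [emom_fL_of_eq_mul (g := fun x y => projY x y ^ 2) (fun _ y => (one_mul ((y : ℝ) ^ 2)).symm)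
    (by simpa using hasSum_fLFactorX) hasSum_sq_mul_fLFactorY]
  norm_num

theorem covM_fL_projX_projY : covM fL projX projY = 5 := by
  rw [covM, emom_fL_projX_mul_projY, emom_fL_projX, emom_fL_projY]
  norm_num

theorem varM_fL_projX : varM fL projX = 30 := by
  rw [varM, emom_fL_projX_sq, emom_fL_projX]
  norm_num

theorem varM_fL_projY : varM fL projY = 40 := by
  rw [varM, emom_fL_projY_sq, emom_fL_projY]
  norm_num

theorem pearson_fL_projX_projY : pearson fL projX projY = √3 / 12 := by
  have hsqrt : √30 * √40 = 20 * √3 := by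
    rw [← Real.sqrt_mul (by norm_num), show (30 * 40 : ℝ) = 20 ^ 2 * 3 by norm_num,
      Real.sqrt_mul (by positivity), Real.sqrt_sq (by norm_num)]
  rw [pearson, covM_fL_projX_projY, varM_fL_projX, varM_fL_projY, hsqrt]
  field_simp
  norm_num

/-- Properties of the low-correlation pmf `f^L`. -/
theorem fL_properties :
    (∀ x y, 0 ≤ fL x y) ∧
    (∑' p : ℕ × ℕ, fL p.1 p.2 = 1) ∧
    (∀ x : ℕ, (∑' y : ℕ, fL x y) = (1 / 6) * (5 / 6) ^ x) ∧
    (∀ y : ℕ, (∑' x : ℕ, fL x y) =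
      (1 / 6) * (if y = 0 then 1 else 0) + (5 / 6) * ((1 / 7) * (6 / 7) ^ y)) ∧
    Emom fL projX = 5 ∧
    Emom fL projY = 5 ∧
    pearson fL projX projY = Real.sqrt 3 / 12 :=
  ⟨fL_nonneg, tsum_fL, fL_marginal_fst, fL_marginal_snd, emom_fL_projX, emom_fL_projY,
    pearson_fL_projX_projY⟩

end DelayedClaims
end
end

section
/- If (X,Y) is a random pair with joint pmf f^L, then the Pearson correlation coefficient of the indicator random variables 1{X>0} and 1{Y>0} equals 1/√2 (≈ 0.7071). -/
open scoped BigOperators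

noncomputable section

namespace DelayedClaims

/-- marginal x-factor with indicator -/
def aX (x : ℕ) : ℝ := if x = 0 then 0 else (1 / 6 : ℝ) * (5 / 6) ^ x

/-- marginal y-factor -/
def bY (y : ℕ) : ℝ := (1 / 7 : ℝ) * (6 / 7) ^ y

/-- marginal y-factor with indicator -/
def bY' (y : ℕ) : ℝ := if y = 0 then 0 else (1 / 7 : ℝ) * (6 / 7) ^ y

lemma summable_aX : Summable aX := by
  have h : Summable (fun x : ℕ => (1 / 6 : ℝ) * (5 / 6) ^ x) :=
    (summable_geometric_of_lt_one (by norm_num) (by norm_num)).mul_left _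
  refine Summable.of_nonneg_of_le (fun x => ?_) (fun x => ?_) h
  · simp only [aX]; split <;> positivity
  · simp only [aX]; split
    · positivity
    · exact le_rfl
 
lemma summable_bY : Summable bY :=
  (summable_geometric_of_lt_one (by norm_num) (by norm_num)).mul_left _

lemma summable_bY' : Summable bY' := by
  refine Summable.of_nonneg_of_le (fun y => ?_) (fun y => ?_) summable_bY
  · simp only [bY']; split <;> positivity
  · simp only [bY', bY]; split
    · positivity
    · exact le_rfl

lemma aX_nonneg : ∀ x, 0 ≤ aX x := by
  intro x; simp only [aX]; split <;> positivity

lemma bY_nonneg : ∀ y, 0 ≤ bY y := by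
  intro y; simp only [bY]; positivity

lemma bY'_nonneg : ∀ y, 0 ≤ bY' y := by
  intro y; simp only [bY']; split <;> positivity

lemma tsum_aX : ∑' x, aX x = 5 / 6 := by
  rw [Summable.tsum_eq_zero_add summable_aX]
  have h : ∀ n : ℕ, aX (n + 1) = (5 / 36 : ℝ) * (5 / 6) ^ n := by
    intro n
    simp only [aX, Nat.succ_ne_zero, if_false, pow_succ]
    ring
  simp only [h, tsum_mul_left,
    tsum_geometric_of_lt_one (by norm_num : (0:ℝ) ≤ 5/6) (by norm_num)]
  norm_num [aX]

lemma tsum_bY : ∑' y, bY y = 1 := by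
  unfold bY
  rw [tsum_mul_left, tsum_geometric_of_lt_one (by norm_num) (by norm_num)]
  norm_num

lemma tsum_bY' : ∑' y, bY' y = 6 / 7 := by
  rw [Summable.tsum_eq_zero_add summable_bY']
  have h : ∀ n : ℕ, bY' (n + 1) = (6 / 49 : ℝ) * (6 / 7) ^ n := by
    intro n
    simp only [bY', Nat.succ_ne_zero, if_false, pow_succ]
    ring
  simp only [h, tsum_mul_left,
    tsum_geometric_of_lt_one (by norm_num : (0:ℝ) ≤ 6/7) (by norm_num)]
  norm_num [bY']

lemma prod_tsum (a b : ℕ → ℝ) (ha : Summable a) (hb : Summable b)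
    (ha0 : ∀ x, 0 ≤ a x) (hb0 : ∀ y, 0 ≤ b y) :
    ∑' p : ℕ × ℕ, a p.1 * b p.2 = (∑' x, a x) * (∑' y, b y) := by
  have hsum : Summable (fun p : ℕ × ℕ => a p.1 * b p.2) := ha.mul_of_nonneg hb ha0 hb0
  have h1 : ∀ x : ℕ, Summable (fun y : ℕ => a x * b y) := fun x => hb.mul_left _
  rw [Summable.tsum_prod' hsum h1]
  simp_rw [tsum_mul_left, ← tsum_mul_right]

lemma Emom_indX : Emom fL indX = 5 / 6 := by
  have h : ∀ p : ℕ × ℕ, indX p.1 p.2 * fL p.1 p.2 = aX p.1 * bY p.2 := by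
    rintro ⟨x, y⟩
    rcases Nat.eq_zero_or_pos x with hx | hx
    · simp [indX, fL, aX, hx]
    · have hx0 : x ≠ 0 := Nat.pos_iff_ne_zero.mp hx
      simp only [indX, fL, aX, bY, if_pos hx, if_neg hx0]
      ring
  rw [show Emom fL indX = ∑' p : ℕ × ℕ, indX p.1 p.2 * fL p.1 p.2 from rfl,
    tsum_congr h, prod_tsum _ _ summable_aX summable_bY aX_nonneg bY_nonneg,
    tsum_aX, tsum_bY]
  norm_num

lemma Emom_indY : Emom fL indY = 5 / 7 := by
  have h : ∀ p : ℕ × ℕ, indY p.1 p.2 * fL p.1 p.2 = aX p.1 * bY' p.2 := by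
    rintro ⟨x, y⟩
    rcases Nat.eq_zero_or_pos x with hx | hx
    · rcases Nat.eq_zero_or_pos y with hy | hy
      · simp [indY, fL, aX, bY', hx, hy]
      · have hy0 : y ≠ 0 := Nat.pos_iff_ne_zero.mp hy
        simp [indY, fL, aX, bY', hx, hy0]
    · have hx0 : x ≠ 0 := Nat.pos_iff_ne_zero.mp hx
      rcases Nat.eq_zero_or_pos y with hy | hy
      · simp [indY, fL, aX, bY', hx0, hy]
      · have hy0 : y ≠ 0 := Nat.pos_iff_ne_zero.mp hy
        simp only [indY, fL, aX, bY', if_pos hy, if_neg hx0, if_neg hy0]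
        ring
  rw [show Emom fL indY = ∑' p : ℕ × ℕ, indY p.1 p.2 * fL p.1 p.2 from rfl,
    tsum_congr h, prod_tsum _ _ summable_aX summable_bY' aX_nonneg bY'_nonneg,
    tsum_aX, tsum_bY']
  norm_num

lemma Emom_indXY : Emom fL (fun x y => indX x y * indY x y) = 5 / 7 := by
  have h : ∀ p : ℕ × ℕ, (indX p.1 p.2 * indY p.1 p.2) * fL p.1 p.2
      = indY p.1 p.2 * fL p.1 p.2 := by
    rintro ⟨x, y⟩
    rcases Nat.eq_zero_or_pos x with hx | hx
    · rcases Nat.eq_zero_or_pos y with hy | hy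
      · simp [indX, indY, hx, hy]
      · have hy0 : y ≠ 0 := Nat.pos_iff_ne_zero.mp hy
        simp [indX, indY, fL, hx, hy0]
    · simp [indX, hx]
  have h2 : Emom fL (fun x y => indX x y * indY x y) = Emom fL indY := by
    unfold Emom
    exact tsum_congr h
  rw [h2, Emom_indY]

lemma Emom_indX_sq : Emom fL (fun x y => indX x y ^ 2) = 5 / 6 := by
  have h : Emom fL (fun x y => indX x y ^ 2) = Emom fL indX := by
    unfold Emom
    refine tsum_congr ?_
    rintro ⟨x, y⟩
    simp only [indX]
    split <;> norm_num
  rw [h, Emom_indX]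

lemma Emom_indY_sq : Emom fL (fun x y => indY x y ^ 2) = 5 / 7 := by
  have h : Emom fL (fun x y => indY x y ^ 2) = Emom fL indY := by
    unfold Emom
    refine tsum_congr ?_
    rintro ⟨x, y⟩
    simp only [indY]
    split <;> norm_num
  rw [h, Emom_indY]

/-- Under `f^L`, the Pearson correlation of the indicators `1{X>0}` and `1{Y>0}`
equals `1/√2`. -/
theorem fL_indicator_correlation :
    pearson fL indX indY = 1 / Real.sqrt 2 := by
  unfold pearson covM varM
  rw [Emom_indXY, Emom_indX, Emom_indY, Emom_indX_sq, Emom_indY_sq]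
  have h1 : (5 / 6 - (5 / 6 : ℝ) ^ 2) = 5 / 36 := by norm_num
  have h2 : (5 / 7 - (5 / 7 : ℝ) ^ 2) = 10 / 49 := by norm_num
  rw [h1, h2]
  have h3 : Real.sqrt (5 / 36) * Real.sqrt (10 / 49) = Real.sqrt 2 * (5 / 42) := by
    rw [← Real.sqrt_mul (by norm_num)]
    have : (5 / 36 : ℝ) * (10 / 49) = 2 * (5 / 42) ^ 2 := by norm_num
    rw [this, Real.sqrt_mul (by norm_num), Real.sqrt_sq (by norm_num)]
  rw [h3]
  have hs : Real.sqrt 2 ≠ 0 := by positivity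
  field_simp
  ring

end DelayedClaims
end
end
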